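/- The Fibonacci Lie algebra L decomposes as a semidirect product L = (A ⋉ L_1) ⋉ Q_1, where A is the abelian ideal spanned by basis monomials containing t_0, L_1 = τ(L) is the shifted copy of L generated by v_2 and v_3, and Q_1 = k·v_1 is the one-dimensional subalgebra spanned by v_1. In particular A ⋉ L_1 is an ideal of L of codimension 1. -/

import Mathlib

set_option linter.unusedSectionVars false

open Finset

section Fib
variable {k : Type} [Field k] [CharP k 2]
variable {R : Type} [CommRing R] [Algebra k R]
variable (t : ℕ → R)

/-- monomial -/
noncomputable def tm (t : ℕ → R) (S : Finset ℕ) : R := ∏ i ∈ S, t i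

variable (hsq : ∀ i, t i ^ 2 = 0)

lemma tm_empty : tm t ∅ = 1 := rfl

lemma tm_insert {a : ℕ} {S : Finset ℕ} (h : a ∉ S) : tm t (insert a S) = t a * tm t S :=
  Finset.prod_insert h

lemma tm_mul_disjoint {S T : Finset ℕ} (h : Disjoint S T) : tm t S * tm t T = tm t (S ∪ T) :=
  (Finset.prod_union h).symm

include hsq in
lemma tm_mul_nondisjoint {S T : Finset ℕ} (h : ¬ Disjoint S T) : tm t S * tm t T = 0 := by
  obtain ⟨l, hlS, hlT⟩ := Finset.not_disjoint_iff.mp h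
  have h1 : tm t S = t l * tm t (S.erase l) := (Finset.mul_prod_erase _ _ hlS).symm
  have h2 : tm t T = t l * tm t (T.erase l) := (Finset.mul_prod_erase _ _ hlT).symm
  have h3 : t l * tm t (S.erase l) * (t l * tm t (T.erase l))
      = t l ^ 2 * (tm t (S.erase l) * tm t (T.erase l)) := by ring
  rw [h1, h2, h3, hsq, zero_mul]

include hsq in
lemma tm_mul_cases (S T : Finset ℕ) : tm t S * tm t T = tm t (S ∪ T) ∨ tm t S * tm t T = 0 := by
  by_cases h : Disjoint S T
  · exact Or.inl (tm_mul_disjoint t h)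
  · exact Or.inr (tm_mul_nondisjoint t hsq h)

lemma der_tm (D : Derivation k R R) (S : Finset ℕ) :
    D (tm t S) = ∑ l ∈ S, tm t (S.erase l) * D (t l) := by
  classical
  induction S using Finset.induction_on with
  | empty => simp [tm]
  | @insert a S ha ih =>
    rw [tm, Finset.prod_insert ha, Derivation.leibniz, Finset.sum_insert ha,
      Finset.erase_insert ha]
    have h1 : ∀ l ∈ S, tm t ((insert a S).erase l) * D (t l)
        = t a * (tm t (S.erase l) * D (t l)) := by
      intro l hl
      have hla : a ≠ l := fun h => ha (h ▸ hl)
      rw [Finset.erase_insert_of_ne hla, tm,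
        Finset.prod_insert (fun h => ha (Finset.mem_of_mem_erase h)), ← tm, mul_assoc]
    rw [Finset.sum_congr rfl h1, ← Finset.mul_sum, ← ih, smul_eq_mul, smul_eq_mul, ← tm]
    ring

lemma der_tm_zero (D : Derivation k R R) (S : Finset ℕ) (h : ∀ l ∈ S, D (t l) = 0) :
    D (tm t S) = 0 := by
  rw [der_tm]
  exact Finset.sum_eq_zero fun l hl => by rw [h l hl, mul_zero]

/-- bracket with scalar on the left -/
lemma brak_smul_left (f : R) (D E : Derivation k R R) :
    ⁅f • D, E⁆ = f • ⁅D, E⁆ - (E f) • D := by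
  ext a
  simp only [Derivation.commutator_apply, Derivation.smul_apply, Derivation.sub_apply,
    Derivation.leibniz, smul_eq_mul]
  ring

lemma brak_smul_right (g : R) (D E : Derivation k R R) :
    ⁅D, g • E⁆ = g • ⁅D, E⁆ + (D g) • E := by
  ext a
  simp only [Derivation.commutator_apply, Derivation.smul_apply, Derivation.add_apply,
    Derivation.leibniz, smul_eq_mul]
  ring


variable (pd : ℕ → Derivation k R R) (hpd : ∀ i j, pd i (t j) = if i = j then 1 else 0)
variable (v : ℕ → Derivation k R R)
variable (hext : ∀ D D' : Derivation k R R, (∀ j, D (t j) = D' (t j)) → D = D')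
variable (hrec : ∀ i, 1 ≤ i → v i = pd i + t (i - 1) • v (i + 1))
variable (hvlt : ∀ i j, 1 ≤ i → j < i → v i (t j) = 0)
variable (hveq : ∀ i, 1 ≤ i → v i (t i) = 1)
variable (hvgt : ∀ i j, 1 ≤ i → i < j → v i (t j) = ∏ m ∈ Finset.Ico (i - 1) (j - 1), t m)

include hvlt in
lemma v_tm_zero (j : ℕ) (S : Finset ℕ) (hj : 1 ≤ j) (h : ∀ m ∈ S, m < j) :
    v j (tm t S) = 0 :=
  der_tm_zero t _ _ fun l hl => hvlt j l hj (h l hl)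

include hpd in
lemma pd_tm_notmem (i : ℕ) (S : Finset ℕ) (h : i ∉ S) : pd i (tm t S) = 0 :=
  der_tm_zero t _ _ fun l hl => by
    rw [hpd]
    exact if_neg fun e => h (by rw [e]; exact hl)

include hpd in
lemma pd_tm_mem (i : ℕ) (S : Finset ℕ) (h : i ∈ S) : pd i (tm t S) = tm t (S.erase i) := by
  rw [der_tm, Finset.sum_eq_single_of_mem i h]
  · rw [hpd, if_pos rfl, mul_one]
  · intro l hl hne
    rw [hpd, if_neg (Ne.symm hne), mul_zero]

include hpd hext hvlt hveq hvgt in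
lemma pd_brak_far (i j : ℕ) (hij : i + 2 ≤ j) : ⁅pd i, v j⁆ = 0 := by
  have hj1 : 1 ≤ j := by omega
  apply hext _ 0
  intro l
  rw [Derivation.commutator_apply]
  have h2 : v j (pd i (t l)) = 0 := by
    rw [hpd]
    split
    · exact Derivation.map_one_eq_zero _
    · exact map_zero _
  have h1 : pd i (v j (t l)) = 0 := by
    rcases lt_trichotomy l j with h | h | h
    · rw [hvlt j l hj1 h, map_zero]
    · subst h; rw [hveq _ hj1, Derivation.map_one_eq_zero]
    · rw [hvgt j l hj1 h, ← tm, pd_tm_notmem t pd hpd]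
      simp only [Finset.mem_Ico, not_and]
      omega
  rw [h1, h2, sub_zero]
  simp

include hpd hext hvlt hveq hvgt in
lemma pd_brak_near (i : ℕ) (hi : 1 ≤ i) : ⁅pd i, v (i + 1)⁆ = v (i + 2) := by
  apply hext
  intro l
  rw [Derivation.commutator_apply]
  have h2 : v (i + 1) (pd i (t l)) = 0 := by
    rw [hpd]
    split
    · exact Derivation.map_one_eq_zero _
    · exact map_zero _
  rw [h2, sub_zero]
  rcases lt_trichotomy l (i + 2) with h | h | h
  · have hlhs : pd i (v (i + 1) (t l)) = 0 := by
      rcases lt_or_eq_of_le (Nat.lt_succ_iff.mp h) with h' | h'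
      · rw [hvlt (i + 1) l (by omega) h', map_zero]
      · subst h'; rw [hveq _ (by omega), Derivation.map_one_eq_zero]
    rw [hlhs, hvlt (i + 2) l (by omega) h]
  · subst h
    rw [hvgt (i + 1) (i + 2) (by omega) (by omega), hveq (i + 2) (by omega)]
    have e1 : Finset.Ico (i + 1 - 1) (i + 2 - 1) = {i} := by
      ext m; simp only [Finset.mem_Ico, Finset.mem_singleton]; omega
    rw [e1, ← tm, pd_tm_mem t pd hpd i {i} (Finset.mem_singleton_self i),
      Finset.erase_singleton, tm_empty]
  · rw [hvgt (i + 1) l (by omega) (by omega), hvgt (i + 2) l (by omega) h, ← tm,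
      pd_tm_mem t pd hpd i _ (by simp only [Finset.mem_Ico]; omega), ← tm]
    congr 1
    ext m
    simp only [Finset.mem_erase, Finset.mem_Ico]
    omega

include hpd hext hrec hvlt hveq hvgt in
lemma vbrak_aux : ∀ d i j, 1 ≤ i → i < j → j - i - 1 = d →
    ⁅v i, v j⁆ = tm t (Finset.Ico (i - 1) (j - 2)) • v (j + 1) := by
  intro d
  induction d with
  | zero =>
    intro i j hi hij hd
    have hj : j = i + 1 := by omega
    subst hj
    rw [hrec i hi, add_lie, brak_smul_left, lie_self, smul_zero,
      hvlt (i + 1) (i - 1) (by omega) (by omega), zero_smul, sub_zero, add_zero,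
      pd_brak_near t pd hpd v hext hvlt hveq hvgt i hi]
    have e1 : Finset.Ico (i - 1) (i + 1 - 2) = ∅ := by
      ext m; simp only [Finset.mem_Ico, Finset.notMem_empty, iff_false, not_and]; omega
    rw [e1, tm_empty, one_smul]
  | succ d ih =>
    intro i j hi hij hd
    rw [hrec i hi, add_lie, brak_smul_left,
      pd_brak_far t pd hpd v hext hvlt hveq hvgt i j (by omega),
      hvlt j (i - 1) (by omega) (by omega), zero_smul, sub_zero, zero_add,
      ih (i + 1) j (by omega) (by omega) (by omega), smul_smul]
    congr 1
    have e1 : (i + 1) - 1 = i := by omega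
    rw [e1]
    have e2 : Finset.Ico (i - 1) (j - 2) = insert (i - 1) (Finset.Ico i (j - 2)) := by
      ext m; simp only [Finset.mem_Ico, Finset.mem_insert]; omega
    rw [e2, tm_insert t (by simp only [Finset.mem_Ico]; omega)]

include hpd hext hrec hvlt hveq hvgt in
lemma vbrak (i j : ℕ) (hi : 1 ≤ i) (hij : i < j) :
    ⁅v i, v j⁆ = tm t (Finset.Ico (i - 1) (j - 2)) • v (j + 1) :=
  vbrak_aux t pd hpd v hext hrec hvlt hveq hvgt (j - i - 1) i j hi hij rfl


/-- span of standard monomial generators -/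
noncomputable def Uspan : Submodule k (Derivation k R R) :=
  Submodule.span k {D | ∃ n S, 1 ≤ n ∧ S ⊆ Finset.Ico 0 (n - 3) ∧ D = tm t S • v n}

lemma mem_Uspan {n : ℕ} {S : Finset ℕ} (hn : 1 ≤ n) (hS : ∀ m ∈ S, m < n - 3) :
    tm t S • v n ∈ Uspan t v :=
  Submodule.subset_span
    ⟨n, S, hn, fun m hm => Finset.mem_Ico.mpr ⟨Nat.zero_le m, hS m hm⟩, rfl⟩

include hsq in
lemma mem_Uspan2 {n : ℕ} {S T : Finset ℕ} (hn : 1 ≤ n) (hS : ∀ m ∈ S, m < n - 3)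
    (hT : ∀ m ∈ T, m < n - 3) : (tm t S * tm t T) • v n ∈ Uspan t v := by
  rcases tm_mul_cases t hsq S T with h | h
  · rw [h]
    exact mem_Uspan t v hn fun m hm => by
      rcases Finset.mem_union.mp hm with h' | h'
      exacts [hS m h', hT m h']
  · rw [h, zero_smul]; exact zero_mem _

include hsq in
lemma mem_Uspan3 {n : ℕ} {S T P : Finset ℕ} (hn : 1 ≤ n) (hS : ∀ m ∈ S, m < n - 3)
    (hT : ∀ m ∈ T, m < n - 3) (hP : ∀ m ∈ P, m < n - 3) :
    (tm t S * (tm t T * tm t P)) • v n ∈ Uspan t v := by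
  rcases tm_mul_cases t hsq T P with h | h
  · rw [h]
    exact mem_Uspan2 t hsq v hn hS fun m hm => by
      rcases Finset.mem_union.mp hm with h' | h'
      exacts [hT m h', hP m h']
  · rw [h, mul_zero, zero_smul]; exact zero_mem _

include hsq hpd hext hrec hvlt hveq hvgt in
lemma brak_gen_mem (i j : ℕ) (S T : Finset ℕ) (hi : 1 ≤ i) (hij : i ≤ j)
    (hS : ∀ m ∈ S, m < i - 3) (hT : ∀ m ∈ T, m < j - 3) :
    ⁅tm t S • v i, tm t T • v j⁆ ∈ Uspan t v := by
  have hj : 1 ≤ j := le_trans hi hij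
  rw [brak_smul_right, brak_smul_left]
  have hvjS : v j (tm t S) = 0 :=
    v_tm_zero t v hvlt j S hj fun m hm => by have := hS m hm; omega
  rw [hvjS, zero_smul, sub_zero, smul_smul]
  apply Submodule.add_mem
  · rcases eq_or_lt_of_le hij with he | hlt
    · subst he; rw [lie_self, smul_zero]; exact zero_mem _
    · rw [vbrak t pd hpd v hext hrec hvlt hveq hvgt i j hi hlt, smul_smul, mul_assoc]
      refine mem_Uspan3 t hsq v (by omega) (fun m hm => by have := hT m hm; omega)
        (fun m hm => by have := hS m hm; omega)
        (fun m hm => by have := Finset.mem_Ico.mp hm; omega)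
  · have happ : (tm t S • v i) (tm t T) = tm t S * v i (tm t T) := by
      rw [Derivation.smul_apply, smul_eq_mul]
    rw [happ, der_tm, Finset.mul_sum, Finset.sum_smul]
    apply Submodule.sum_mem
    intro l hl
    rcases lt_trichotomy l i with h | h | h
    · rw [hvlt i l hi h, mul_zero, mul_zero, zero_smul]; exact zero_mem _
    · subst h
      rw [hveq l hi, mul_one]
      have hlT := hT l hl
      exact mem_Uspan2 t hsq v hj (fun m hm => by have := hS m hm; omega)
        (fun m hm => hT m (Finset.mem_of_mem_erase hm))
    · rw [hvgt i l hi h, ← tm]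
      have hlT := hT l hl
      refine mem_Uspan3 t hsq v hj (fun m hm => by have := hS m hm; omega)
        (fun m hm => hT m (Finset.mem_of_mem_erase hm))
        (fun m hm => by have := Finset.mem_Ico.mp hm; omega)

include hsq hpd hext hrec hvlt hveq hvgt in
lemma Uspan_lie_closed : ∀ x ∈ Uspan t v, ∀ y ∈ Uspan t v, ⁅x, y⁆ ∈ Uspan t v := by
  intro x hx
  induction hx using Submodule.span_induction with
  | mem x hxX =>
    intro y hy
    induction hy using Submodule.span_induction with
    | mem y hyX =>
      obtain ⟨i, S, hi, hS, rfl⟩ := hxX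
      obtain ⟨j, T, hj, hT, rfl⟩ := hyX
      have hS' : ∀ m ∈ S, m < i - 3 := fun m hm => (Finset.mem_Ico.mp (hS hm)).2
      have hT' : ∀ m ∈ T, m < j - 3 := fun m hm => (Finset.mem_Ico.mp (hT hm)).2
      rcases le_total i j with h | h
      · exact brak_gen_mem t hsq pd hpd v hext hrec hvlt hveq hvgt i j S T hi h hS' hT'
      · rw [← lie_skew]
        exact Submodule.neg_mem _
          (brak_gen_mem t hsq pd hpd v hext hrec hvlt hveq hvgt j i T S hj h hT' hS')
    | zero => rw [lie_zero]; exact zero_mem _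
    | add y z _ _ ihy ihz => rw [lie_add]; exact add_mem ihy ihz
    | smul c y _ ihy => rw [lie_smul]; exact Submodule.smul_mem _ _ ihy
  | zero => intro y hy; rw [zero_lie]; exact zero_mem _
  | add x z _ _ ihx ihz => intro y hy; rw [add_lie]; exact add_mem (ihx y hy) (ihz y hy)
  | smul c x _ ihx => intro y hy; rw [smul_lie]; exact Submodule.smul_mem _ _ (ihx y hy)

include hpd hext hrec hvlt hveq hvgt in
lemma vmemJ (s : ℕ) (hs : 1 ≤ s) : ∀ n, s ≤ n →
    v n ∈ LieSubalgebra.lieSpan k (Derivation k R R) {v s, v (s + 1)} := by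
  intro n
  induction n using Nat.strong_induction_on with
  | _ n ih =>
    intro hn
    rcases eq_or_lt_of_le hn with h | h
    · subst h; exact LieSubalgebra.subset_lieSpan (Set.mem_insert _ _)
    rcases eq_or_lt_of_le (Nat.succ_le_of_lt h) with h' | h'
    · subst h'; exact LieSubalgebra.subset_lieSpan (Set.mem_insert_iff.mpr (Or.inr rfl))
    have h1 := ih (n - 2) (by omega) (by omega)
    have h2 := ih (n - 1) (by omega) (by omega)
    have hb := (LieSubalgebra.lieSpan k (Derivation k R R) {v s, v (s + 1)}).lie_mem h1 h2
    have he : ⁅v (n - 2), v (n - 1)⁆ = v n := by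
      rw [vbrak t pd hpd v hext hrec hvlt hveq hvgt (n - 2) (n - 1) (by omega) (by omega)]
      have e : Finset.Ico (n - 2 - 1) (n - 1 - 2) = ∅ := by
        ext m; simp only [Finset.mem_Ico, Finset.notMem_empty, iff_false, not_and]; omega
      rw [e, tm_empty, one_smul]
      congr 1
      omega
    rwa [he] at hb

include hpd hext hrec hvlt hveq hvgt in
lemma bumpJ (s : ℕ) (hs : 1 ≤ s) (T : Finset ℕ) (j : ℕ) (hj : s + 1 ≤ j)
    (hT : ∀ m ∈ T, m + 1 < j)
    (hx : tm t T • v j ∈ LieSubalgebra.lieSpan k (Derivation k R R) {v s, v (s + 1)}) :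
    tm t T • v (j + 1) ∈ LieSubalgebra.lieSpan k (Derivation k R R) {v s, v (s + 1)} := by
  have hv : v (j - 1) ∈ _ := vmemJ t pd hpd v hext hrec hvlt hveq hvgt s hs (j - 1) (by omega)
  have he : ⁅tm t T • v j, v (j - 1)⁆ = -(tm t T • v (j + 1)) := by
    rw [brak_smul_left,
      v_tm_zero t v hvlt (j - 1) T (by omega) (fun m hm => by have := hT m hm; omega),
      zero_smul, sub_zero, ← lie_skew,
      vbrak t pd hpd v hext hrec hvlt hveq hvgt (j - 1) j (by omega) (by omega)]
    have e : Finset.Ico (j - 1 - 1) (j - 2) = ∅ := by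
      ext m; simp only [Finset.mem_Ico, Finset.notMem_empty, iff_false, not_and]; omega
    rw [e, tm_empty, one_smul, smul_neg]
  have hb := (LieSubalgebra.lieSpan k (Derivation k R R) {v s, v (s + 1)}).lie_mem hx hv
  rw [he] at hb
  have hb2 := (LieSubalgebra.lieSpan k (Derivation k R R) {v s, v (s + 1)}).smul_mem (-1 : k) hb
  rwa [neg_one_smul, neg_neg] at hb2

include hpd hext hrec hvlt hveq hvgt in
lemma genJ (s : ℕ) (hs : 1 ≤ s) : ∀ S : Finset ℕ, ∀ hne : S.Nonempty,
    (∀ m ∈ S, s - 1 ≤ m) → ∀ n, S.max' hne + 4 ≤ n →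
    tm t S • v n ∈ LieSubalgebra.lieSpan k (Derivation k R R) {v s, v (s + 1)} := by
  intro S
  induction S using Finset.strongInduction with
  | _ S ih =>
    intro hne hlb n hn
    set b := S.max' hne with hbdef
    have hbS : b ∈ S := S.max'_mem hne
    have hbs : s - 1 ≤ b := hlb b hbS
    have hmemT : ∀ m ∈ S.erase b, m < b := fun m hm =>
      lt_of_le_of_ne (S.le_max' m (Finset.mem_of_mem_erase hm)) (Finset.ne_of_mem_erase hm)
    have step1 : tm t (S.erase b) • v (b + 3) ∈
        LieSubalgebra.lieSpan k (Derivation k R R) {v s, v (s + 1)} := by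
      by_cases hT : (S.erase b).Nonempty
      · refine ih (S.erase b) (Finset.erase_ssubset hbS) hT
          (fun m hm => hlb m (Finset.mem_of_mem_erase hm)) (b + 3) ?_
        have := hmemT _ ((S.erase b).max'_mem hT)
        omega
      · rw [Finset.not_nonempty_iff_eq_empty] at hT
        rw [hT, tm_empty, one_smul]
        exact vmemJ t pd hpd v hext hrec hvlt hveq hvgt s hs (b + 3) (by omega)
    have hv1 : v (b + 1) ∈ _ :=
      vmemJ t pd hpd v hext hrec hvlt hveq hvgt s hs (b + 1) (by omega)
    have step2 : tm t S • v (b + 4) ∈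
        LieSubalgebra.lieSpan k (Derivation k R R) {v s, v (s + 1)} := by
      have hb2 := (LieSubalgebra.lieSpan k (Derivation k R R) {v s, v (s + 1)}).lie_mem
        hv1 step1
      rw [brak_smul_right,
        v_tm_zero t v hvlt (b + 1) (S.erase b) (by omega)
          (fun m hm => by have := hmemT m hm; omega),
        zero_smul, add_zero,
        vbrak t pd hpd v hext hrec hvlt hveq hvgt (b + 1) (b + 3) (by omega) (by omega),
        smul_smul] at hb2
      have e1 : Finset.Ico (b + 1 - 1) (b + 3 - 2) = {b} := by
        ext m; simp only [Finset.mem_Ico, Finset.mem_singleton]; omega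
      have e2 : tm t (S.erase b) * tm t {b} = tm t S := by
        rw [tm_mul_disjoint t (Finset.disjoint_singleton_right.mpr
          (Finset.notMem_erase b S))]
        congr 1
        ext m
        simp only [Finset.mem_union, Finset.mem_erase, Finset.mem_singleton]
        constructor
        · rintro (⟨_, hm⟩ | rfl)
          · exact hm
          · exact hbS
        · intro hm
          rcases eq_or_ne m b with rfl | hne
          · exact Or.inr rfl
          · exact Or.inl ⟨hne, hm⟩
      rw [e1, e2] at hb2
      exact hb2
    have step3 : ∀ m, b + 4 ≤ m → tm t S • v m ∈
        LieSubalgebra.lieSpan k (Derivation k R R) {v s, v (s + 1)} := by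
      intro m hm
      induction m, hm using Nat.le_induction with
      | base => exact step2
      | succ m hm ihm =>
        exact bumpJ t pd hpd v hext hrec hvlt hveq hvgt s hs S m (by omega)
          (fun x hx => by have := S.le_max' x hx; omega) ihm
    exact step3 n hn

include hpd hext hrec hvlt hveq hvgt in
lemma genJ' (s : ℕ) (hs : 1 ≤ s) (S : Finset ℕ) (hlb : ∀ m ∈ S, s - 1 ≤ m) (n : ℕ)
    (hns : s ≤ n) (hSn : ∀ m ∈ S, m + 4 ≤ n) :
    tm t S • v n ∈ LieSubalgebra.lieSpan k (Derivation k R R) {v s, v (s + 1)} := by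
  rcases S.eq_empty_or_nonempty with h | h
  · subst h
    rw [tm_empty, one_smul]
    exact vmemJ t pd hpd v hext hrec hvlt hveq hvgt s hs n hns
  · exact genJ t pd hpd v hext hrec hvlt hveq hvgt s hs S h hlb n
      (hSn _ (S.max'_mem h))

include hpd in
lemma pd0_adj : ∀ y ∈ Algebra.adjoin k (Set.range fun i => t (i + 1)), pd 0 y = 0 := by
  intro y hy
  induction hy using Algebra.adjoin_induction with
  | mem y hy =>
    obtain ⟨i, rfl⟩ := hy
    rw [hpd]
    exact if_neg (by omega)
  | algebraMap c => exact Derivation.map_algebraMap _ c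
  | add a b _ _ iha ihb => rw [map_add, iha, ihb, add_zero]
  | mul a b _ _ iha ihb => rw [Derivation.leibniz, iha, ihb, smul_zero, smul_zero, add_zero]

include hsq hpd hext in
lemma core_zero (x : Derivation k R R)
    (hI : ∀ l, ∃ r : R, x (t l) = t 0 * r)
    (hR : ∀ l, x (t l) ∈ Algebra.adjoin k (Set.range fun i => t (i + 1))) :
    x = 0 := by
  apply hext x 0
  intro l
  obtain ⟨r, hr⟩ := hI l
  have h0 := pd0_adj t pd hpd _ (hR l)
  rw [hr, Derivation.leibniz] at h0
  have hp : pd 0 (t 0) = 1 := by rw [hpd]; exact if_pos rfl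
  rw [hp, smul_eq_mul, smul_eq_mul, mul_one] at h0
  have hr2 : r = -(t 0 * pd 0 r) := eq_neg_of_add_eq_zero_right h0
  have hz : x (t l) = 0 := by
    rw [hr, hr2]
    have h2 := hsq 0
    calc t 0 * -(t 0 * pd 0 r) = -(t 0 ^ 2 * pd 0 r) := by ring
    _ = 0 := by rw [h2, zero_mul, neg_zero]
  rw [hz]
  simp

/-- derivations preserving the subalgebra generated by `t₁, t₂, …` -/
lemma der_adj (D : Derivation k R R)
    (hD : ∀ l, D (t l) ∈ Algebra.adjoin k (Set.range fun i => t (i + 1))) :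
    ∀ y ∈ Algebra.adjoin k (Set.range fun i => t (i + 1)),
      D y ∈ Algebra.adjoin k (Set.range fun i => t (i + 1)) := by
  intro y hy
  induction hy using Algebra.adjoin_induction with
  | mem y hy => obtain ⟨i, rfl⟩ := hy; exact hD (i + 1)
  | algebraMap c => rw [Derivation.map_algebraMap]; exact zero_mem _
  | add a b _ _ iha ihb => rw [map_add]; exact add_mem iha ihb
  | mul a b ha hb iha ihb =>
    rw [Derivation.leibniz, smul_eq_mul, smul_eq_mul]
    exact add_mem (mul_mem ha ihb) (mul_mem hb iha)

/-- the Lie subalgebra of derivations with all values in `k[t₁, t₂, …]` -/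
noncomputable def Msub : LieSubalgebra k (Derivation k R R) where
  carrier := {D | ∀ l, D (t l) ∈ Algebra.adjoin k (Set.range fun i => t (i + 1))}
  add_mem' := fun {D} {E} hD hE l => by
    rw [Derivation.add_apply]
    exact add_mem (hD l) (hE l)
  zero_mem' := fun l => by
    rw [Derivation.zero_apply]
    exact zero_mem _
  smul_mem' := fun c D hD l => by
    rw [Derivation.smul_apply]
    exact Subalgebra.smul_mem _ (hD l) c
  lie_mem' := fun {D} {E} hD hE l => by
    rw [Derivation.commutator_apply]
    exact sub_mem (der_adj t D hD _ (hE l)) (der_adj t E hE _ (hD l))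

lemma mem_Msub {D : Derivation k R R} :
    D ∈ Msub t ↔ ∀ l, D (t l) ∈ Algebra.adjoin k (Set.range fun i => t (i + 1)) :=
  Iff.rfl

include hvlt hveq hvgt in
lemma v_mem_Msub (n : ℕ) (hn : 2 ≤ n) : v n ∈ Msub t := by
  intro l
  rcases lt_trichotomy l n with h | h | h
  · rw [hvlt n l (by omega) h]; exact zero_mem _
  · subst h; rw [hveq l (by omega)]; exact one_mem _
  · rw [hvgt n l (by omega) h]
    apply prod_mem
    intro m hm
    have hm1 : 1 ≤ m := by
      have := Finset.mem_Ico.mp hm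
      omega
    refine Algebra.subset_adjoin ⟨m - 1, ?_⟩
    show t (m - 1 + 1) = t m
    rw [Nat.sub_add_cancel hm1]

/-- derivations killing `t l0` -/
noncomputable def killSub (l0 : ℕ) : LieSubalgebra k (Derivation k R R) where
  carrier := {D | D (t l0) = 0}
  add_mem' := fun {D} {E} hD hE => by
    have hD' : D (t l0) = 0 := hD
    have hE' : E (t l0) = 0 := hE
    show (D + E) (t l0) = 0
    rw [Derivation.add_apply, hD', hE', add_zero]
  zero_mem' := by
    show (0 : Derivation k R R) (t l0) = 0
    simp
  smul_mem' := fun c D hD => by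
    have hD' : D (t l0) = 0 := hD
    show (c • D) (t l0) = 0
    rw [Derivation.smul_apply, hD', smul_zero]
  lie_mem' := fun {D} {E} hD hE => by
    have hD' : D (t l0) = 0 := hD
    have hE' : E (t l0) = 0 := hE
    show ⁅D, E⁆ (t l0) = 0
    rw [Derivation.commutator_apply, hD', hE', map_zero, map_zero, sub_zero]

lemma mem_killSub {D : Derivation k R R} {l0 : ℕ} : D ∈ killSub t l0 ↔ D (t l0) = 0 :=
  Iff.rfl

/-- derivations sending `t 1` into scalars -/
noncomputable def constSub : LieSubalgebra k (Derivation k R R) where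
  carrier := {D | ∃ c : k, D (t 1) = algebraMap k R c}
  add_mem' := by
    rintro D E ⟨c, hc⟩ ⟨d, hd⟩
    exact ⟨c + d, by rw [Derivation.add_apply, hc, hd, map_add]⟩
  zero_mem' := ⟨0, by simp⟩
  smul_mem' := by
    rintro e D ⟨c, hc⟩
    exact ⟨e * c, by rw [Derivation.smul_apply, hc, map_mul, Algebra.smul_def]⟩
  lie_mem' := by
    rintro D E ⟨c, hc⟩ ⟨d, hd⟩
    exact ⟨0, by
      rw [Derivation.commutator_apply, hc, hd, Derivation.map_algebraMap,
        Derivation.map_algebraMap, sub_zero, map_zero]⟩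

lemma mem_constSub {D : Derivation k R R} :
    D ∈ constSub t ↔ ∃ c : k, D (t 1) = algebraMap k R c :=
  Iff.rfl

end Fib

/-- The Fibonacci Lie algebra `L` decomposes as a semidirect product
`L = (A ⋉ L₁) ⋉ Q₁`, where `A` is the abelian ideal spanned by the basis monomials containing
`t₀`, `L₁ = τ(L)` is the shifted copy of `L` generated by `v₂, v₃`, and `Q₁ = k·v₁`.
Concretely: `L = A ⊕ L₁ ⊕ Q₁` as vector spaces, `A ⊔ L₁` is an ideal of `L` of codimension 1
(a complement being `Q₁`), and `A` is an ideal of `A ⋉ L₁`. -/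
theorem fibonacci_semidirect_decomposition
    {k : Type} [Field k] [CharP k 2]
    {R : Type} [CommRing R] [Algebra k R]
    -- `R = k[t₀, t₁, …]/(tᵢ²)` is the ring of truncated polynomials:
    (t : ℕ → R)
    (hsq : ∀ i, t i ^ 2 = 0)
    (hadj : Algebra.adjoin k (Set.range t) = ⊤)
    (hext : ∀ D D' : Derivation k R R, (∀ j, D (t j) = D' (t j)) → D = D')
    -- `pd i` is the partial derivative `∂ᵢ = ∂/∂tᵢ`:
    (pd : ℕ → Derivation k R R)
    (hpd : ∀ i j, pd i (t j) = if i = j then 1 else 0)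
    -- `v i` are the pivot elements, defined recursively by `vᵢ = ∂ᵢ + t_{i-1} v_{i+1}`,
    -- i.e. the derivations `vᵢ = ∂ᵢ + t_{i-1}(∂_{i+1} + tᵢ(∂_{i+2} + ⋯))`:
    (v : ℕ → Derivation k R R)
    (hrec : ∀ i, 1 ≤ i → v i = pd i + t (i - 1) • v (i + 1))
    (hvlt : ∀ i j, 1 ≤ i → j < i → v i (t j) = 0)
    (hveq : ∀ i, 1 ≤ i → v i (t i) = 1)
    (hvgt : ∀ i j, 1 ≤ i → i < j → v i (t j) = ∏ m ∈ Finset.Ico (i - 1) (j - 1), t m)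
    : ∀ A : Submodule k (Derivation k R R),
        A = Submodule.span k
              {D | ∃ (n : ℕ) (z : ℕ → Bool),
                D = (t 0 * ∏ j ∈ Finset.Icc 1 n, if z j then t j else 1) • v (n + 4)} →
        ∀ L1 Q1 : Submodule k (Derivation k R R),
          L1 = (LieSubalgebra.lieSpan k (Derivation k R R) {v 2, v 3}).toSubmodule →
          Q1 = Submodule.span k {v 1} →
          A ⊔ L1 ⊔ Q1 =
              (LieSubalgebra.lieSpan k (Derivation k R R) {v 1, v 2}).toSubmodule ∧
            A ⊓ L1 = ⊥ ∧
            (A ⊔ L1) ⊓ Q1 = ⊥ ∧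
            (∀ x ∈ LieSubalgebra.lieSpan k (Derivation k R R) {v 1, v 2},
              ∀ m ∈ A ⊔ L1, ⁅x, m⁆ ∈ A ⊔ L1) ∧
            (∀ m ∈ A ⊔ L1, ∀ a ∈ A, ⁅m, a⁆ ∈ A) := by
  intro A hA L1 Q1 hL1 hQ1
  rcases subsingleton_or_nontrivial R with hR | hR
  · haveI : Subsingleton (Derivation k R R) :=
      ⟨fun D E => by ext a; exact Subsingleton.elim _ _⟩
    haveI : Subsingleton (Submodule k (Derivation k R R)) :=
      ⟨fun P Q => by
        ext x
        have hx : x = 0 := Subsingleton.elim _ _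
        subst hx
        simp⟩
    refine ⟨Subsingleton.elim _ _, Subsingleton.elim _ _, Subsingleton.elim _ _, ?_, ?_⟩
    · intro x _ m _
      have h : (⁅x, m⁆ : Derivation k R R) = 0 := Subsingleton.elim _ _
      rw [h]; exact Submodule.zero_mem _
    · intro m _ a _
      have h : (⁅m, a⁆ : Derivation k R R) = 0 := Subsingleton.elim _ _
      rw [h]; exact Submodule.zero_mem _
  -- main case
  have VB := vbrak t pd hpd v hext hrec hvlt hveq hvgt
  have GEN := genJ' t pd hpd v hext hrec hvlt hveq hvgt
  have VM := vmemJ t pd hpd v hext hrec hvlt hveq hvgt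
  -- A ≤ L
  have hAleL : A ≤ (LieSubalgebra.lieSpan k (Derivation k R R) {v 1, v 2}).toSubmodule := by
    rw [hA, Submodule.span_le]
    rintro D ⟨n, z, rfl⟩
    have h0 : (0 : ℕ) ∉ (Finset.Icc 1 n).filter (fun j => z j = true) := by simp
    have hcoef : t 0 * ∏ j ∈ Finset.Icc 1 n, (if z j then t j else 1)
        = tm t (insert 0 ((Finset.Icc 1 n).filter fun j => z j = true)) := by
      rw [tm_insert t h0, tm, Finset.prod_filter]
    simp only [SetLike.mem_coe, LieSubalgebra.mem_toSubmodule]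
    rw [hcoef]
    refine GEN 1 le_rfl _ (fun m _ => by omega) (n + 4) (by omega) (fun m hm => ?_)
    rcases Finset.mem_insert.mp hm with rfl | hm'
    · omega
    · have := (Finset.mem_Icc.mp (Finset.mem_filter.mp hm').1).2
      omega
  -- basic members of L
  have hv3eq : ⁅v 1, v 2⁆ = v 3 := by
    rw [VB 1 2 le_rfl (by omega)]
    have e : Finset.Ico (1 - 1) (2 - 2) = ∅ := by
      ext m; simp only [Finset.mem_Ico, Finset.notMem_empty, iff_false, not_and]; omega
    rw [e, tm_empty, one_smul]
  have hv1L : v 1 ∈ LieSubalgebra.lieSpan k (Derivation k R R) {v 1, v 2} :=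
    LieSubalgebra.subset_lieSpan (Set.mem_insert _ _)
  have hv2L : v 2 ∈ LieSubalgebra.lieSpan k (Derivation k R R) {v 1, v 2} :=
    LieSubalgebra.subset_lieSpan (Set.mem_insert_iff.mpr (Or.inr rfl))
  have hv3L : v 3 ∈ LieSubalgebra.lieSpan k (Derivation k R R) {v 1, v 2} :=
    hv3eq ▸ (LieSubalgebra.lieSpan k (Derivation k R R) {v 1, v 2}).lie_mem hv1L hv2L
  have hL1leL : ∀ x ∈ LieSubalgebra.lieSpan k (Derivation k R R) {v 2, v 3},
      x ∈ LieSubalgebra.lieSpan k (Derivation k R R) {v 1, v 2} := fun x hx =>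
    (LieSubalgebra.lieSpan_le.mpr (by rintro y (rfl | rfl); exacts [hv2L, hv3L])) hx
  -- L ≤ U
  have hLU : (LieSubalgebra.lieSpan k (Derivation k R R) {v 1, v 2}).toSubmodule
      ≤ Uspan t v := by
    intro x hx
    rw [LieSubalgebra.mem_toSubmodule] at hx
    have hle : LieSubalgebra.lieSpan k (Derivation k R R) {v 1, v 2} ≤
        { Uspan t v with
          lie_mem' := fun {a b} ha hb =>
            Uspan_lie_closed t hsq pd hpd v hext hrec hvlt hveq hvgt a ha b hb } := by
      rw [LieSubalgebra.lieSpan_le]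
      rintro y (rfl | rfl)
      · have h := mem_Uspan t v (n := 1) (S := ∅) le_rfl (by simp)
        rwa [tm_empty, one_smul] at h
      · have h := mem_Uspan t v (n := 2) (S := ∅) (by omega) (by simp)
        rwa [tm_empty, one_smul] at h
    exact hle hx
  -- U ≤ A ⊔ L1 ⊔ Q1
  have hUle : Uspan t v ≤ A ⊔ L1 ⊔ Q1 := by
    rw [Uspan, Submodule.span_le]
    rintro D ⟨n, S, hn, hS, rfl⟩
    simp only [SetLike.mem_coe]
    by_cases h0 : 0 ∈ S
    · refine Submodule.mem_sup_left (Submodule.mem_sup_left ?_)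
      rw [hA]
      refine Submodule.subset_span ?_
      have hn4 : 4 ≤ n := by have := Finset.mem_Ico.mp (hS h0); omega
      refine ⟨n - 4, fun j => decide (j ∈ S), ?_⟩
      have h0f : (0 : ℕ) ∉ (Finset.Icc 1 (n - 4)).filter
          (fun j => decide (j ∈ S) = true) := by simp
      have hins : insert 0 ((Finset.Icc 1 (n - 4)).filter
          fun j => decide (j ∈ S) = true) = S := by
        ext m
        simp only [Finset.mem_insert, Finset.mem_filter, Finset.mem_Icc, decide_eq_true_eq]
        constructor
        · rintro (rfl | ⟨⟨_, _⟩, hm⟩)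
          · exact h0
          · exact hm
        · intro hm
          rcases Nat.eq_zero_or_pos m with rfl | hpos
          · exact Or.inl rfl
          · right
            have := Finset.mem_Ico.mp (hS hm)
            exact ⟨⟨hpos, by omega⟩, hm⟩
      have hco : t 0 * ∏ j ∈ Finset.Icc 1 (n - 4), (if decide (j ∈ S) then t j else 1)
          = tm t S := by
        calc t 0 * ∏ j ∈ Finset.Icc 1 (n - 4), (if decide (j ∈ S) then t j else 1)
            = t 0 * tm t ((Finset.Icc 1 (n - 4)).filter fun j => decide (j ∈ S) = true) := by
              rw [tm, Finset.prod_filter]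
          _ = tm t (insert 0 ((Finset.Icc 1 (n - 4)).filter
              fun j => decide (j ∈ S) = true)) := (tm_insert t h0f).symm
          _ = tm t S := by rw [hins]
      have hnn : n - 4 + 4 = n := by omega
      rw [hnn, hco]
    · by_cases hne : S.Nonempty
      · refine Submodule.mem_sup_left (Submodule.mem_sup_right ?_)
        rw [hL1, LieSubalgebra.mem_toSubmodule]
        have hn4 : 4 ≤ n := by
          obtain ⟨m, hm⟩ := hne
          have := Finset.mem_Ico.mp (hS hm)
          omega
        refine GEN 2 (by omega) S (fun m hm => ?_) n (by omega) (fun m hm => ?_)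
        · have : m ≠ 0 := fun e => h0 (e ▸ hm)
          omega
        · have := Finset.mem_Ico.mp (hS hm)
          omega
      · rw [Finset.not_nonempty_iff_eq_empty] at hne
        subst hne
        rw [tm_empty, one_smul]
        rcases eq_or_lt_of_le hn with h1 | h1
        · apply Submodule.mem_sup_right
          rw [hQ1, ← h1]
          exact Submodule.mem_span_singleton_self _
        · refine Submodule.mem_sup_left (Submodule.mem_sup_right ?_)
          rw [hL1, LieSubalgebra.mem_toSubmodule]
          exact VM 2 (by omega) n (by omega)
  -- Item 1
  have item1 : A ⊔ L1 ⊔ Q1 =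
      (LieSubalgebra.lieSpan k (Derivation k R R) {v 1, v 2}).toSubmodule := by
    apply le_antisymm
    · refine sup_le (sup_le hAleL ?_) ?_
      · rw [hL1]
        intro x hx
        rw [LieSubalgebra.mem_toSubmodule] at hx ⊢
        exact hL1leL x hx
      · rw [hQ1, Submodule.span_le]
        intro y hy
        rw [Set.mem_singleton_iff] at hy
        subst hy
        simp only [SetLike.mem_coe, LieSubalgebra.mem_toSubmodule]
        exact hv1L
    · exact le_trans hLU hUle
  -- killing lemmas
  have hAkill : ∀ l0, l0 ≤ 3 → ∀ x ∈ A, x (t l0) = 0 := by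
    intro l0 hl0 x hx
    rw [hA] at hx
    induction hx using Submodule.span_induction with
    | mem D hD =>
      obtain ⟨n, z, rfl⟩ := hD
      rw [Derivation.smul_apply, hvlt (n + 4) l0 (by omega) (by omega), smul_zero]
    | zero => simp
    | add x y _ _ ihx ihy => rw [Derivation.add_apply, ihx, ihy, add_zero]
    | smul c x _ ihx => rw [Derivation.smul_apply, ihx, smul_zero]
  have hL1kill : ∀ l0, l0 ≤ 1 → ∀ x ∈ L1, x (t l0) = 0 := by
    intro l0 hl0 x hx
    rw [hL1, LieSubalgebra.mem_toSubmodule] at hx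
    have hle : LieSubalgebra.lieSpan k (Derivation k R R) {v 2, v 3} ≤ killSub t l0 := by
      rw [LieSubalgebra.lieSpan_le]
      rintro y (rfl | rfl)
      · exact (mem_killSub t).mpr (hvlt 2 l0 (by omega) (by omega))
      · exact (mem_killSub t).mpr (hvlt 3 l0 (by omega) (by omega))
    exact (mem_killSub t).mp (hle hx)
  have hALkill1 : ∀ x ∈ A ⊔ L1, x (t 1) = 0 := by
    intro x hx
    obtain ⟨w, hw, z, hz, hsum⟩ := Submodule.mem_sup.mp hx
    rw [← hsum, Derivation.add_apply, hAkill 1 (by omega) w hw, hL1kill 1 le_rfl z hz,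
      add_zero]
  -- Item 3
  have item3 : (A ⊔ L1) ⊓ Q1 = ⊥ := by
    rw [eq_bot_iff]
    rintro x ⟨hx1, hxQ⟩
    rw [hQ1] at hxQ
    obtain ⟨c, rfl⟩ := Submodule.mem_span_singleton.mp hxQ
    have h1 := hALkill1 _ hx1
    rw [Derivation.smul_apply, hveq 1 le_rfl] at h1
    have h2 : algebraMap k R c = 0 := by rw [Algebra.algebraMap_eq_smul_one]; exact h1
    have hc : c = 0 := RingHom.injective (algebraMap k R) (h2.trans (map_zero _).symm)
    rw [hc, zero_smul]
    exact Submodule.zero_mem ⊥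
  -- values of A are multiples of t 0
  have hAval : ∀ x ∈ A, ∀ r : R, ∃ u, x r = t 0 * u := by
    intro x hx
    rw [hA] at hx
    induction hx using Submodule.span_induction with
    | mem D hD =>
      obtain ⟨n, z, rfl⟩ := hD
      intro r
      refine ⟨(∏ j ∈ Finset.Icc 1 n, if z j then t j else 1) * v (n + 4) r, ?_⟩
      rw [Derivation.smul_apply, smul_eq_mul, mul_assoc]
    | zero => intro r; exact ⟨0, by simp⟩
    | add x y _ _ ihx ihy =>
      intro r
      obtain ⟨u1, h1⟩ := ihx r
      obtain ⟨u2, h2⟩ := ihy r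
      exact ⟨u1 + u2, by rw [Derivation.add_apply, h1, h2, mul_add]⟩
    | smul c x _ ihx =>
      intro r
      obtain ⟨u, h⟩ := ihx r
      exact ⟨c • u, by rw [Derivation.smul_apply, h, mul_smul_comm]⟩
  -- values of L1 lie in the subalgebra generated by t₁, t₂, …
  have hL1M : ∀ x ∈ LieSubalgebra.lieSpan k (Derivation k R R) {v 2, v 3}, ∀ l,
      x (t l) ∈ Algebra.adjoin k (Set.range fun i => t (i + 1)) := by
    intro x hx
    have hle : LieSubalgebra.lieSpan k (Derivation k R R) {v 2, v 3} ≤ Msub t := by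
      rw [LieSubalgebra.lieSpan_le]
      rintro y (rfl | rfl)
      · exact v_mem_Msub t v hvlt hveq hvgt 2 le_rfl
      · exact v_mem_Msub t v hvlt hveq hvgt 3 (by omega)
    exact (mem_Msub t).mp (hle hx)
  -- Item 2
  have item2 : A ⊓ L1 = ⊥ := by
    rw [eq_bot_iff]
    rintro x ⟨hxA, hxL1⟩
    have hx0 : x = 0 := by
      apply core_zero t hsq pd hpd hext x
      · intro l
        exact hAval x hxA (t l)
      · intro l
        rw [hL1] at hxL1
        simp only [SetLike.mem_coe] at hxL1
        rw [LieSubalgebra.mem_toSubmodule] at hxL1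
        exact hL1M x hxL1 l
    rw [hx0]
    exact Submodule.zero_mem ⊥
  -- A ⊔ L1 sits inside L
  have hALleL : ∀ m ∈ A ⊔ L1, m ∈ LieSubalgebra.lieSpan k (Derivation k R R) {v 1, v 2} := by
    intro m hm
    have h2 : m ∈ A ⊔ L1 ⊔ Q1 := Submodule.mem_sup_left hm
    rw [item1, LieSubalgebra.mem_toSubmodule] at h2
    exact h2
  have hLconst : ∀ x ∈ LieSubalgebra.lieSpan k (Derivation k R R) {v 1, v 2},
      ∃ c : k, x (t 1) = algebraMap k R c := by
    intro x hx
    have hle : LieSubalgebra.lieSpan k (Derivation k R R) {v 1, v 2} ≤ constSub t := by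
      rw [LieSubalgebra.lieSpan_le]
      rintro y (rfl | rfl)
      · exact ⟨1, by rw [hveq 1 le_rfl, map_one]⟩
      · exact ⟨0, by rw [hvlt 2 1 (by omega) (by omega), map_zero]⟩
    exact hle hx
  -- Item 4
  have item4 : ∀ x ∈ LieSubalgebra.lieSpan k (Derivation k R R) {v 1, v 2},
      ∀ m ∈ A ⊔ L1, ⁅x, m⁆ ∈ A ⊔ L1 := by
    intro x hx m hm
    have hmL := hALleL m hm
    have hbL : ⁅x, m⁆ ∈ LieSubalgebra.lieSpan k (Derivation k R R) {v 1, v 2} :=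
      (LieSubalgebra.lieSpan k (Derivation k R R) {v 1, v 2}).lie_mem hx hmL
    have hm1 : m (t 1) = 0 := hALkill1 m hm
    obtain ⟨c1, hc1⟩ := hLconst x hx
    have hval : ⁅x, m⁆ (t 1) = 0 := by
      rw [Derivation.commutator_apply, hm1, map_zero, hc1, Derivation.map_algebraMap,
        zero_sub, neg_zero]
    have hmem : ⁅x, m⁆ ∈ A ⊔ L1 ⊔ Q1 := by
      rw [item1, LieSubalgebra.mem_toSubmodule]
      exact hbL
    obtain ⟨w, hw, q, hq, hsum⟩ := Submodule.mem_sup.mp hmem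
    rw [hQ1] at hq
    obtain ⟨c, rfl⟩ := Submodule.mem_span_singleton.mp hq
    have hw1 : w (t 1) = 0 := hALkill1 w hw
    have hcz : algebraMap k R c = 0 := by
      have happ := congrArg (fun D : Derivation k R R => D (t 1)) hsum
      simp only [Derivation.add_apply, Derivation.smul_apply] at happ
      rw [hw1, hveq 1 le_rfl, zero_add, hval] at happ
      rw [Algebra.algebraMap_eq_smul_one]
      exact happ
    have hc0 : c = 0 := RingHom.injective (algebraMap k R) (hcz.trans (map_zero _).symm)
    rw [← hsum, hc0, zero_smul, add_zero]
    exact hw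
  -- Item 5
  have item5 : ∀ m ∈ A ⊔ L1, ∀ a ∈ A, ⁅m, a⁆ ∈ A := by
    intro m hm a ha
    have hmLie := hALleL m hm
    have haAL : a ∈ A ⊔ L1 := Submodule.mem_sup_left ha
    have h4 := item4 m hmLie a haAL
    obtain ⟨a', ha', y, hy, hsum⟩ := Submodule.mem_sup.mp h4
    have hm0 : m (t 0) = 0 := by
      obtain ⟨w, hw, z, hz, hsum2⟩ := Submodule.mem_sup.mp hm
      rw [← hsum2, Derivation.add_apply, hAkill 0 (by omega) w hw,
        hL1kill 0 (by omega) z hz, add_zero]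
    have hIa := hAval a ha
    have hIbr : ∀ r : R, ∃ u, ⁅m, a⁆ r = t 0 * u := by
      intro r
      obtain ⟨u1, hu1⟩ := hIa r
      obtain ⟨u2, hu2⟩ := hIa (m r)
      refine ⟨m u1 - u2, ?_⟩
      rw [Derivation.commutator_apply, hu1, hu2, Derivation.leibniz, hm0, smul_eq_mul,
        smul_eq_mul, mul_zero, add_zero]
      ring
    have hy0 : y = 0 := by
      apply core_zero t hsq pd hpd hext y
      · intro l
        obtain ⟨u1, hu1⟩ := hIbr (t l)
        obtain ⟨u2, hu2⟩ := hAval a' ha' (t l)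
        refine ⟨u1 - u2, ?_⟩
        have hyv : y (t l) = ⁅m, a⁆ (t l) - a' (t l) := by
          rw [← hsum, Derivation.add_apply]
          ring
        rw [hyv, hu1, hu2]
        ring
      · intro l
        rw [hL1, LieSubalgebra.mem_toSubmodule] at hy
        exact hL1M y hy l
    rw [← hsum, hy0, add_zero]
    exact ha'
  exact ⟨item1, item2, item3, item4, item5⟩
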